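/- In the commuting graph of Sₙ = ⟨a, b | a^{n+1} = b² = 0, aba = 0, b aⁱ b = 0 ∀ i⟩, the set {aⁱb : 1 ≤ i ≤ n−1} ∪ {b aʲ : 1 ≤ j ≤ n−1} ∪ {b} is a clique of size 2n − 1. -/

import Mathlib

/-- The commuting graph of a semigroup: vertices are the non-central
elements, two distinct vertices are adjacent iff they commute. -/
def CommutingGraph (S : Type*) [Semigroup S] :
    SimpleGraph {x : S // x ∉ Set.center S} where
  Adj a b := a ≠ b ∧ (a : S) * b = (b : S) * a
  symm := ⟨fun _ _ ⟨h, hc⟩ => ⟨h.symm, hc.symm⟩⟩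
  loopless := ⟨fun _ ⟨h, _⟩ => h rfl⟩

/-- The free semigroup with zero on the two generators `a = of false`, `b = of true`. -/
abbrev W2 := WithZero (FreeSemigroup Bool)

/-- The generator `a`. -/
def ga : FreeSemigroup Bool := FreeSemigroup.of false

/-- The generator `b`. -/
def gb : FreeSemigroup Bool := FreeSemigroup.of true

/-- `fsPow x k = x^(k+1)` (positive powers in a semigroup). -/
def fsPow (x : FreeSemigroup Bool) : ℕ → FreeSemigroup Bool
  | 0 => x
  | k + 1 => fsPow x k * x

/-- `apow i` is `a^i` for `i ≥ 1` (junk value `a` at `i = 0`). -/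
def apow (i : ℕ) : FreeSemigroup Bool := fsPow ga (i - 1)

/-- The defining relations of `Sₙ`: `a^(n+1) = b² = 0`, `aba = 0`, `b aⁱ b = 0` for `i ≥ 1`. -/
def SnRel (n : ℕ) : W2 → W2 → Prop := fun p q =>
  (p = ((apow (n + 1) : FreeSemigroup Bool) : W2) ∧ q = 0) ∨
  (p = ((gb * gb : FreeSemigroup Bool) : W2) ∧ q = 0) ∨
  (p = ((ga * gb * ga : FreeSemigroup Bool) : W2) ∧ q = 0) ∨
  (∃ i : ℕ, 1 ≤ i ∧ p = ((gb * apow i * gb : FreeSemigroup Bool) : W2) ∧ q = 0)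

/-- The congruence generated by the relations of `Sₙ`. -/
def SnCon (n : ℕ) : Con W2 := conGen (SnRel n)

/-- The semigroup `Sₙ = ⟨a, b | a^(n+1) = b² = 0, aba = baⁱb = 0 ∀ i ≥ 1⟩`. -/
def Sn (n : ℕ) : Type := (SnCon n).Quotient

instance (n : ℕ) : Semigroup (Sn n) := Con.semigroup _

/-- The canonical projection onto `Sₙ`. -/
def smk (n : ℕ) : W2 → Sn n := (SnCon n).toQuotient

/-- The elements `{aⁱb : 1 ≤ i ≤ n−1} ∪ {baʲ : 1 ≤ j ≤ n−1} ∪ {b}` of `Sₙ`. -/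
def SnCliqueElts (n : ℕ) : Set (Sn n) :=
  {x | ∃ i : ℕ, 1 ≤ i ∧ i ≤ n - 1 ∧
      x = smk n ((apow i * gb : FreeSemigroup Bool) : W2)} ∪
  {x | ∃ j : ℕ, 1 ≤ j ∧ j ≤ n - 1 ∧
      x = smk n ((gb * apow j : FreeSemigroup Bool) : W2)} ∪
  {smk n ((gb : FreeSemigroup Bool) : W2)}

/-! The normal forms `0`, `aⁱ`, `b`, `aⁱb`, `baʲ` of the elements of `Sₙ`, multiplied by
concatenation with every word containing `aba`, `b²`, `baⁱb` or `aⁿ⁺¹` sent to `0`, form a semigroup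
in which the relations of `Sₙ` hold. The resulting morphism out of `Sₙ` separates the clique
elements and shows that none of them commutes with `a`. The clique elements commute pairwise
because all their products vanish: each contains a factor `b²` or `baⁱb`. -/

def WithZero.liftMulHom {α β : Type*} [Mul α] [MulZeroClass β] (f : α →ₙ* β) :
    WithZero α →ₙ* β where
  toFun x := WithZero.recZeroCoe 0 f x
  map_mul' x y := by
    induction x using WithZero.recZeroCoe <;> induction y using WithZero.recZeroCoe <;>
      simp [← WithZero.coe_mul]

def Con.liftMulHom {M P : Type*} [Mul M] [Mul P] (c : Con M) (f : M →ₙ* P) (H : c ≤ Con.ker f) :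
    c.Quotient →ₙ* P where
  toFun x := Con.liftOn x f fun _ _ h => H h
  map_mul' x y := Con.induction_on₂ x y fun x y => map_mul f x y

theorem MulHom.notMem_center_of_map_mul_ne {S T : Type*} [Semigroup S] [Mul T] (f : S →ₙ* T)
    {x y : S} (h : f y * f x ≠ f x * f y) : x ∉ Set.center S := by
  intro hx
  rw [← map_mul, ← map_mul, Semigroup.mem_center_iff.mp hx y] at h
  exact h rfl

inductive SnNF (n : ℕ) : Type
  | zero
  | pow (i : ℕ)
  | b
  | powB (i : ℕ)
  | bPow (j : ℕ)

namespace SnNF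

variable {n : ℕ}

instance : Zero (SnNF n) := ⟨zero⟩

def mul : SnNF n → SnNF n → SnNF n
  | pow i, pow j => if i + j ≤ n then pow (i + j) else 0
  | pow i, b => powB i
  | pow i, powB j => if i + j ≤ n then powB (i + j) else 0
  | b, pow j => bPow j
  | bPow i, pow j => if i + j ≤ n then bPow (i + j) else 0
  | _, _ => 0

instance : SemigroupWithZero (SnNF n) where
  mul := mul
  mul_assoc x y z := by
    cases x <;> cases y <;> cases z <;> simp only [HMul.hMul, mul] <;> split_ifs <;>
      simp only [add_assoc] <;> split_ifs <;> first | rfl | omega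
  zero_mul _ := rfl
  mul_zero x := by cases x <;> rfl

@[simp] theorem pow_mul_pow (i j : ℕ) :
    (pow i * pow j : SnNF n) = if i + j ≤ n then pow (i + j) else 0 := rfl

@[simp] theorem pow_mul_b (i : ℕ) : (pow i * b : SnNF n) = powB i := rfl

@[simp] theorem pow_mul_powB (i j : ℕ) :
    (pow i * powB j : SnNF n) = if i + j ≤ n then powB (i + j) else 0 := rfl

@[simp] theorem pow_mul_bPow (i j : ℕ) : (pow i * bPow j : SnNF n) = 0 := rfl

@[simp] theorem b_mul_pow (j : ℕ) : (b * pow j : SnNF n) = bPow j := rfl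

@[simp] theorem powB_mul_pow (i j : ℕ) : (powB i * pow j : SnNF n) = 0 := rfl

@[simp] theorem bPow_mul_pow (i j : ℕ) :
    (bPow i * pow j : SnNF n) = if i + j ≤ n then bPow (i + j) else 0 := rfl

@[simp] theorem powB_ne_zero (i : ℕ) : (powB i : SnNF n) ≠ 0 := nofun

@[simp] theorem bPow_ne_zero (i : ℕ) : (bPow i : SnNF n) ≠ 0 := nofun

end SnNF

theorem apow_succ {i : ℕ} (hi : 1 ≤ i) : apow (i + 1) = apow i * ga := by
  obtain ⟨k, rfl⟩ := Nat.exists_eq_add_of_le' hi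
  rfl

theorem apow_add {i j : ℕ} (hi : 1 ≤ i) (hj : 1 ≤ j) : apow (i + j) = apow i * apow j := by
  induction j, hj using Nat.le_induction with
  | base => exact apow_succ hi
  | succ j hj ih => rw [← add_assoc, apow_succ (by omega), ih, apow_succ hj, mul_assoc]

namespace SnNF

/-- The image of the generator `a` is `a¹`, which is `0` when `n = 0`. -/
def ofGen (n : ℕ) : Bool → SnNF n
  | false => if 1 ≤ n then pow 1 else 0
  | true => b

def eval (n : ℕ) : W2 →ₙ* SnNF n := WithZero.liftMulHom (FreeSemigroup.lift (ofGen n))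

variable {n : ℕ}

theorem eval_coe_mul (x y : FreeSemigroup Bool) :
    eval n ((x * y : FreeSemigroup Bool) : W2) = eval n (x : W2) * eval n (y : W2) := by
  rw [WithZero.coe_mul, map_mul]

@[simp] theorem eval_zero : eval n 0 = 0 := rfl

theorem eval_ga : eval n (ga : W2) = if 1 ≤ n then pow 1 else 0 := rfl

theorem eval_gb : eval n (gb : W2) = b := rfl

theorem eval_apow {i : ℕ} (hi : 1 ≤ i) : eval n (apow i : W2) = if i ≤ n then pow i else 0 := by
  induction i, hi using Nat.le_induction with
  | base => exact eval_ga
  | succ i hi ih =>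
    rw [apow_succ hi, eval_coe_mul, ih, eval_ga]
    split_ifs <;> grind [pow_mul_pow, zero_mul, mul_zero]

theorem snCon_le_ker_eval : SnCon n ≤ Con.ker (eval n) := by
  refine Con.conGen_le.mpr ?_
  rintro p q (⟨rfl, rfl⟩ | ⟨rfl, rfl⟩ | ⟨rfl, rfl⟩ | ⟨i, hi, rfl, rfl⟩) <;> rw [Con.ker_rel]
  · simp [eval_apow]
  · rfl
  · rw [eval_coe_mul, eval_coe_mul, eval_ga, eval_gb]
    split_ifs <;> rfl
  · rw [eval_coe_mul, eval_coe_mul, eval_apow hi, eval_gb]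
    split_ifs <;> rfl

end SnNF

namespace Sn

variable {n : ℕ}

instance : Zero (Sn n) := ⟨smk n 0⟩

protected theorem zero_mul (x : Sn n) : 0 * x = 0 :=
  Con.induction_on (c := SnCon n) x fun x => congrArg (smk n) (zero_mul x)

protected theorem mul_zero (x : Sn n) : x * 0 = 0 :=
  Con.induction_on (c := SnCon n) x fun x => congrArg (smk n) (mul_zero x)

variable (n) in
def aPow (i : ℕ) : Sn n := smk n (apow i : W2)

variable (n) in
def b : Sn n := smk n (gb : W2)

variable (n) in
def normalForm : Sn n →ₙ* SnNF n := (SnCon n).liftMulHom (SnNF.eval n) SnNF.snCon_le_ker_eval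

theorem smk_apow_mul_gb (i : ℕ) :
    smk n ((apow i * gb : FreeSemigroup Bool) : W2) = aPow n i * b n :=
  rfl

theorem smk_gb_mul_apow (j : ℕ) :
    smk n ((gb * apow j : FreeSemigroup Bool) : W2) = b n * aPow n j :=
  rfl

theorem smk_eq_zero_of_snRel {p : W2} (h : SnRel n p 0) : smk n p = 0 :=
  (Con.eq _).mpr (ConGen.Rel.of _ _ h)

theorem b_mul_b : b n * b n = 0 :=
  smk_eq_zero_of_snRel (Or.inr (Or.inl ⟨rfl, rfl⟩))

theorem b_mul_b_mul (x : Sn n) : b n * (b n * x) = 0 := by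
  rw [← mul_assoc, b_mul_b, Sn.zero_mul]

theorem b_mul_aPow_mul_b {i : ℕ} (hi : 1 ≤ i) : b n * (aPow n i * b n) = 0 := by
  rw [← mul_assoc]
  exact smk_eq_zero_of_snRel (Or.inr (Or.inr (Or.inr ⟨i, hi, rfl, rfl⟩)))

theorem b_mul_aPow_mul_b_mul {i : ℕ} (hi : 1 ≤ i) (x : Sn n) :
    b n * (aPow n i * (b n * x)) = 0 := by
  rw [← mul_assoc (aPow n i), ← mul_assoc, b_mul_aPow_mul_b hi, Sn.zero_mul]

theorem aPow_mul_aPow_mul {i j : ℕ} (hi : 1 ≤ i) (hj : 1 ≤ j) (x : Sn n) :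
    aPow n i * (aPow n j * x) = aPow n (i + j) * x := by
  rw [← mul_assoc]
  exact congrArg (fun w : FreeSemigroup Bool => smk n (w : W2) * x) (apow_add hi hj).symm

theorem normalForm_aPow {i : ℕ} (hi : 1 ≤ i) (hin : i ≤ n) :
    normalForm n (aPow n i) = .pow i := by
  have h : SnNF.eval n (apow i : W2) = _ := SnNF.eval_apow hi
  rwa [if_pos hin] at h

theorem normalForm_b : normalForm n (b n) = .b := rfl

theorem normalForm_aPow_mul_b {i : ℕ} (hi : 1 ≤ i) (hin : i ≤ n) :
    normalForm n (aPow n i * b n) = .powB i := by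
  rw [map_mul, normalForm_aPow hi hin, normalForm_b, SnNF.pow_mul_b]

theorem normalForm_b_mul_aPow {j : ℕ} (hj : 1 ≤ j) (hjn : j ≤ n) :
    normalForm n (b n * aPow n j) = .bPow j := by
  rw [map_mul, normalForm_aPow hj hjn, normalForm_b, SnNF.b_mul_pow]

theorem cliqueElts_eq : SnCliqueElts n =
    (fun i => aPow n i * b n) '' Set.Icc 1 (n - 1) ∪
      (fun j => b n * aPow n j) '' Set.Icc 1 (n - 1) ∪ {b n} := by
  ext x
  simp only [SnCliqueElts, smk_apow_mul_gb, smk_gb_mul_apow, Set.mem_union, Set.mem_image,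
    Set.mem_Icc, and_assoc, eq_comm]
  rfl

theorem mul_eq_zero_of_mem_cliqueElts {x y : Sn n} (hx : x ∈ SnCliqueElts n)
    (hy : y ∈ SnCliqueElts n) : x * y = 0 := by
  rw [cliqueElts_eq] at hx hy
  rcases hx with (⟨i, ⟨hi, -⟩, rfl⟩ | ⟨i, ⟨hi, -⟩, rfl⟩) | rfl <;>
    rcases hy with (⟨j, ⟨hj, -⟩, rfl⟩ | ⟨j, ⟨hj, -⟩, rfl⟩) | rfl <;>
    simp (disch := omega) only [mul_assoc, aPow_mul_aPow_mul, b_mul_b, b_mul_b_mul,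
      b_mul_aPow_mul_b, b_mul_aPow_mul_b_mul, Sn.mul_zero]

theorem aPow_mul_b_notMem_center {i : ℕ} (hi : 1 ≤ i) (hin : i < n) :
    aPow n i * b n ∉ Set.center (Sn n) := by
  refine (normalForm n).notMem_center_of_map_mul_ne (y := aPow n 1) ?_
  rw [normalForm_aPow_mul_b hi hin.le, normalForm_aPow le_rfl (by omega)]
  simp [add_comm 1 i, Nat.succ_le_of_lt hin]

theorem b_mul_aPow_notMem_center {j : ℕ} (hj : 1 ≤ j) (hjn : j < n) :
    b n * aPow n j ∉ Set.center (Sn n) := by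
  refine (normalForm n).notMem_center_of_map_mul_ne (y := aPow n 1) ?_
  rw [normalForm_b_mul_aPow hj hjn.le, normalForm_aPow le_rfl (by omega)]
  simp [Nat.succ_le_of_lt hjn]

theorem b_notMem_center (hn : 1 ≤ n) : b n ∉ Set.center (Sn n) := by
  refine (normalForm n).notMem_center_of_map_mul_ne (y := aPow n 1) ?_
  rw [normalForm_b, normalForm_aPow le_rfl hn]
  simp

theorem cliqueElts_subset_compl_center (hn : 1 ≤ n) :
    SnCliqueElts n ⊆ (Set.center (Sn n))ᶜ := by
  rw [cliqueElts_eq]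
  rintro _ ((⟨i, ⟨hi, hin⟩, rfl⟩ | ⟨j, ⟨hj, hjn⟩, rfl⟩) | rfl)
  · exact aPow_mul_b_notMem_center hi (by omega)
  · exact b_mul_aPow_notMem_center hj (by omega)
  · exact b_notMem_center hn

theorem injOn_aPow_mul_b : Set.InjOn (fun i => aPow n i * b n) (Set.Icc 1 n) := by
  intro i ⟨hi, hin⟩ j ⟨hj, hjn⟩ h
  have h' := congrArg (normalForm n) h
  rw [normalForm_aPow_mul_b hi hin, normalForm_aPow_mul_b hj hjn] at h'
  exact SnNF.powB.inj h'

theorem injOn_b_mul_aPow : Set.InjOn (fun j => b n * aPow n j) (Set.Icc 1 n) := by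
  intro i ⟨hi, hin⟩ j ⟨hj, hjn⟩ h
  have h' := congrArg (normalForm n) h
  rw [normalForm_b_mul_aPow hi hin, normalForm_b_mul_aPow hj hjn] at h'
  exact SnNF.bPow.inj h'

theorem ncard_cliqueElts (hn : 1 ≤ n) : (SnCliqueElts n).ncard = 2 * n - 1 := by
  have hIcc : Set.Icc 1 (n - 1) ⊆ Set.Icc 1 n := Set.Icc_subset_Icc_right (Nat.sub_le n 1)
  have hdisj : Disjoint ((fun i => aPow n i * b n) '' Set.Icc 1 (n - 1))
      ((fun j => b n * aPow n j) '' Set.Icc 1 (n - 1)) := by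
    rw [Set.disjoint_left]
    rintro _ ⟨i, ⟨hi, hin⟩, rfl⟩ ⟨j, ⟨hj, hjn⟩, h⟩
    have h' := congrArg (normalForm n) h
    rw [normalForm_aPow_mul_b hi (by omega), normalForm_b_mul_aPow hj (by omega)] at h'
    cases h'
  have hb : b n ∉ (fun i => aPow n i * b n) '' Set.Icc 1 (n - 1) ∪
      (fun j => b n * aPow n j) '' Set.Icc 1 (n - 1) := by
    rintro (⟨i, ⟨hi, hin⟩, h⟩ | ⟨j, ⟨hj, hjn⟩, h⟩) <;> have h' := congrArg (normalForm n) h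
    · rw [normalForm_aPow_mul_b hi (by omega), normalForm_b] at h'
      cases h'
    · rw [normalForm_b_mul_aPow hj (by omega), normalForm_b] at h'
      cases h'
  rw [cliqueElts_eq, Set.ncard_union_eq (Set.disjoint_singleton_right.mpr hb),
    Set.ncard_union_eq hdisj, (injOn_aPow_mul_b.mono hIcc).ncard_image,
    (injOn_b_mul_aPow.mono hIcc).ncard_image, Set.ncard_Icc_nat, Set.ncard_singleton]
  omega

end Sn

theorem Sn_clique (n : ℕ) (hn : 1 ≤ n) :
    SnCliqueElts n ⊆ (Set.center (Sn n))ᶜ ∧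
    (CommutingGraph (Sn n)).IsClique
      {v : {x : Sn n // x ∉ Set.center (Sn n)} | (v : Sn n) ∈ SnCliqueElts n} ∧
    Set.ncard
      {v : {x : Sn n // x ∉ Set.center (Sn n)} | (v : Sn n) ∈ SnCliqueElts n} =
      2 * n - 1 := by
  have hsub := Sn.cliqueElts_subset_compl_center hn
  refine ⟨hsub, fun u hu v hv huv => ⟨huv, ?_⟩, ?_⟩
  · rw [Sn.mul_eq_zero_of_mem_cliqueElts hu hv, Sn.mul_eq_zero_of_mem_cliqueElts hv hu]
  · rw [← Sn.ncard_cliqueElts hn]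
    exact Set.ncard_preimage_of_injective_subset_range Subtype.val_injective
      fun x hx => ⟨⟨x, hsub hx⟩, rfl⟩
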